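/- Let X be a ball Banach function space on ℝⁿ such that the Hardy–Littlewood maximal operator M satisfies the weak-type bound ‖χ_{{Mf > λ}}‖_X ≤ C λ⁻¹ ‖f‖_X for all f ∈ X and λ > 0. Then there exists a constant C' > 0 such that for every ball B ⊂ ℝⁿ, ‖χ_B‖_X · ‖χ_B‖_{X'} ≤ C' |B|, where X' is the associate space of X. -/

import Mathlib

/-!
For `y ∈ B = B(x, r)` we have `B ⊆ B(y, 2r)` and `|B(y, 2r)| = 2ⁿ |B|`, so
`Mf(y) ≥ 2⁻ⁿ |B|⁻¹ ∫_B |f|`. Hence `B` lies in every superlevel set `{Mf > a}` with `a` below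
this average, and the weak-type bound gives `‖χ_B‖_X ∫_B |f| ≤ 2ⁿ C |B| ‖f‖_X`. Taking the
supremum over `‖f‖_X ≤ 1` bounds `‖χ_B‖_X ‖χ_B‖_{X'}`.
-/

open MeasureTheory ENNReal Filter

noncomputable section

abbrev En (n : ℕ) := EuclideanSpace ℝ (Fin n)

/-- A ball Banach function space on ℝⁿ, encoded by its (extended-real-valued) norm
functional on real-valued functions. -/
structure BallBanach (n : ℕ) where
  N : (En n → ℝ) → ℝ≥0∞
  eq_zero : ∀ f : En n → ℝ, N f = 0 → f =ᵐ[volume] 0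
  mono : ∀ f g : En n → ℝ, (∀ᵐ x ∂volume, |g x| ≤ |f x|) → N g ≤ N f
  add_le : ∀ f g : En n → ℝ, N (f + g) ≤ N f + N g
  fatou : ∀ (f : ℕ → En n → ℝ) (g : En n → ℝ),
    (∀ᵐ x ∂volume, ∀ m, 0 ≤ f m x) →
    (∀ᵐ x ∂volume, Monotone fun m => f m x) →
    (∀ᵐ x ∂volume, Tendsto (fun m => f m x) atTop (nhds (g x))) →
    Tendsto (fun m => N (f m)) atTop (nhds (N g))
  ball_fin : ∀ (x : En n) (r : ℝ), 0 < r → N ((Metric.ball x r).indicator fun _ => 1) < ⊤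
  loc : ∀ (x : En n) (r : ℝ), 0 < r → ∃ C : ℝ≥0∞, C < ⊤ ∧ ∀ f : En n → ℝ,
    (∫⁻ y in Metric.ball x r, ENNReal.ofReal |f y|) ≤ C * N f

/-- The associate (Köthe dual) norm of a ball Banach function space. -/
def BallBanach.dual {n : ℕ} (b : BallBanach n) (g : En n → ℝ) : ℝ≥0∞ :=
  ⨆ (f : En n → ℝ) (_ : b.N f ≤ 1), ∫⁻ x, ENNReal.ofReal |f x * g x|

/-- The Hardy–Littlewood maximal function. -/
def maximal {n : ℕ} (f : En n → ℝ) (x : En n) : ℝ≥0∞ :=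
  ⨆ (r : ℝ) (_ : 0 < r),
    (volume (Metric.ball x r))⁻¹ * ∫⁻ y in Metric.ball x r, ENNReal.ofReal |f y|

/-- The dyadic annulus `D_k = {x : 2^(k-1) < |x| ≤ 2^k}`. -/
def annulus (n : ℕ) (k : ℤ) : Set (En n) := {x | (2:ℝ)^(k-1) < ‖x‖ ∧ ‖x‖ ≤ (2:ℝ)^k}

/-- The Herz-type norm associated with a ball Banach function space. -/
def herzNorm {n : ℕ} (b : BallBanach n) (α q : ℝ) (g : En n → ℝ) : ℝ≥0∞ :=
  (∑' k : ℤ, (2:ℝ≥0∞) ^ ((k:ℝ) * α * q) * b.N ((annulus n k).indicator g) ^ q) ^ (1/q)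

/-- A central `(X, α, s)`-atom supported in the closed ball `B(0,r)`. -/
def IsCentralAtom {n : ℕ} (b : BallBanach n) (α : ℝ) (s : ℕ) (a : En n → ℝ) (r : ℝ) : Prop :=
  Measurable a ∧ (∀ x, x ∉ Metric.closedBall (0 : En n) r → a x = 0) ∧
  b.N a ≤ (volume (Metric.closedBall (0 : En n) r)) ^ (-(α / (n:ℝ))) ∧
  ∀ β : Fin n → ℕ, (∑ i, β i) ≤ s → ∫ x, a x * ∏ i, (x i) ^ (β i) = 0

/-- The non-tangential grand maximal function `M_N f`. -/
def grandMaximal (n NN : ℕ) (f : En n → ℝ) (x : En n) : ℝ≥0∞ :=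
  ⨆ (φ : SchwartzMap (En n) ℝ)
    (_ : ∀ k m : ℕ, k ≤ NN → m ≤ NN → SchwartzMap.seminorm ℝ k m φ ≤ 1)
    (y : En n) (t : ℝ) (_ : 0 < t) (_ : dist y x < t),
    ENNReal.ofReal |∫ z, f z * ((t ^ n)⁻¹ * φ (t⁻¹ • (y - z)))|

section

variable {E : Type*} [NormedAddCommGroup E] [NormedSpace ℝ E] [MeasurableSpace E] [BorelSpace E]
  [FiniteDimensional ℝ E]

theorem MeasureTheory.Measure.addHaar_ball_two_mul (μ : Measure E) [μ.IsAddHaarMeasure] (x y : E)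
    (r : ℝ) :
    μ (Metric.ball y (2 * r)) = 2 ^ Module.finrank ℝ E * μ (Metric.ball x r) := by
  rw [Measure.addHaar_ball_mul_of_pos μ y two_pos, Measure.addHaar_ball_center μ x,
    ENNReal.ofReal_pow zero_le_two, ENNReal.ofReal_ofNat]

end

theorem lintegral_ofReal_abs_mul_indicator_one {α : Type*} [MeasurableSpace α] {μ : Measure α}
    {s : Set α} (hs : MeasurableSet s) (f : α → ℝ) :
    ∫⁻ z, ENNReal.ofReal |f z * s.indicator (fun _ => 1) z| ∂μ =
      ∫⁻ z in s, ENNReal.ofReal |f z| ∂μ := by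
  rw [← lintegral_indicator hs]
  congr 1 with z
  by_cases hz : z ∈ s <;> simp [hz]

theorem setLIntegral_ball_div_le_maximal {n : ℕ} (f : En n → ℝ) {x y : En n} {r : ℝ}
    (hy : y ∈ Metric.ball x r) :
    (∫⁻ z in Metric.ball x r, ENNReal.ofReal |f z|) / (2 ^ n * volume (Metric.ball x r)) ≤
      maximal f y := by
  have hr : 0 < r := Metric.pos_of_mem_ball hy
  have hsub : Metric.ball x r ⊆ Metric.ball y (2 * r) :=
    Metric.ball_subset_ball' (by rw [dist_comm]; linarith [Metric.mem_ball.mp hy])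
  have hvol : volume (Metric.ball y (2 * r)) = 2 ^ n * volume (Metric.ball x r) := by
    rw [Measure.addHaar_ball_two_mul, finrank_euclideanSpace_fin]
  calc (∫⁻ z in Metric.ball x r, ENNReal.ofReal |f z|) / (2 ^ n * volume (Metric.ball x r))
      ≤ (volume (Metric.ball y (2 * r)))⁻¹ *
          ∫⁻ z in Metric.ball y (2 * r), ENNReal.ofReal |f z| := by
        rw [hvol, div_eq_mul_inv, mul_comm]
        gcongr
    _ ≤ maximal f y := le_iSup₂_of_le (2 * r) (by positivity) le_rfl

namespace BallBanach

variable {n : ℕ} (b : BallBanach n)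

def MaximalWeakType (C : ℝ≥0∞) : Prop :=
  ∀ (f : En n → ℝ) (lam : ℝ), 0 < lam →
    b.N ({x | ENNReal.ofReal lam < maximal f x}.indicator fun _ => 1) ≤
      C * (ENNReal.ofReal lam)⁻¹ * b.N f

theorem N_indicator_mono {s t : Set (En n)} (hst : s ⊆ t) :
    b.N (s.indicator fun _ => 1) ≤ b.N (t.indicator fun _ => 1) :=
  b.mono _ _ <| Filter.Eventually.of_forall fun z => by
    by_cases hz : z ∈ s <;> simp [hz, Set.indicator_of_mem (hst _)]

theorem MaximalWeakType.mul_N_indicator_le {b : BallBanach n} {C : ℝ≥0∞} (hC : b.MaximalWeakType C)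
    (f : En n → ℝ) {s : Set (En n)} {a : ℝ≥0∞} (ha : a ≠ ⊤) (hs : ∀ y ∈ s, a < maximal f y) :
    a * b.N (s.indicator fun _ => 1) ≤ C * b.N f := by
  rcases eq_or_ne a 0 with rfl | ha0
  · simp
  have hlam : ENNReal.ofReal a.toReal = a := ENNReal.ofReal_toReal ha
  calc a * b.N (s.indicator fun _ => 1)
      ≤ a * b.N ({y | a < maximal f y}.indicator fun _ => 1) := by
        gcongr
        exact b.N_indicator_mono hs
    _ ≤ a * (C * a⁻¹ * b.N f) := by
        gcongr
        simpa only [hlam] using hC f a.toReal (ENNReal.toReal_pos ha0 ha)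
    _ = C * b.N f := by
        rw [mul_comm C, mul_assoc, ← mul_assoc a, ENNReal.mul_inv_cancel ha0 ha, one_mul]

theorem setLIntegral_ball_mul_N_indicator_le {C : ℝ≥0∞} (hC : b.MaximalWeakType C) (f : En n → ℝ)
    (x : En n) {r : ℝ} (hr : 0 < r) :
    (∫⁻ z in Metric.ball x r, ENNReal.ofReal |f z|) * b.N ((Metric.ball x r).indicator fun _ => 1) ≤
      2 ^ n * C * volume (Metric.ball x r) * b.N f := by
  set W := 2 ^ n * volume (Metric.ball x r)
  have hW0 : W ≠ 0 := mul_ne_zero (by simp) (Metric.measure_ball_pos volume x hr).ne'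
  have hWtop : W ≠ ⊤ := ENNReal.mul_ne_top (by simp) measure_ball_lt_top.ne
  have hav : (∫⁻ z in Metric.ball x r, ENNReal.ofReal |f z|) / W *
      b.N ((Metric.ball x r).indicator fun _ => 1) ≤ C * b.N f := by
    refine ENNReal.mul_le_of_forall_lt fun a ha k hk => ?_
    calc a * k ≤ a * b.N ((Metric.ball x r).indicator fun _ => 1) := by gcongr
      _ ≤ C * b.N f := hC.mul_N_indicator_le f (ne_top_of_lt ha) fun y hy =>
          ha.trans_le (setLIntegral_ball_div_le_maximal f hy)
  calc (∫⁻ z in Metric.ball x r, ENNReal.ofReal |f z|) *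
        b.N ((Metric.ball x r).indicator fun _ => 1)
      = (∫⁻ z in Metric.ball x r, ENNReal.ofReal |f z|) / W *
          b.N ((Metric.ball x r).indicator fun _ => 1) * W := by
        rw [mul_right_comm, ENNReal.div_mul_cancel hW0 hWtop]
    _ ≤ C * b.N f * W := by gcongr
    _ = 2 ^ n * C * volume (Metric.ball x r) * b.N f := by ring

theorem N_indicator_ball_mul_dual_le {C : ℝ≥0∞} (hC : b.MaximalWeakType C) (x : En n) {r : ℝ}
    (hr : 0 < r) :
    b.N ((Metric.ball x r).indicator fun _ => 1) * b.dual ((Metric.ball x r).indicator fun _ => 1) ≤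
      2 ^ n * C * volume (Metric.ball x r) := by
  simp only [dual, ENNReal.mul_iSup, lintegral_ofReal_abs_mul_indicator_one
    measurableSet_ball]
  refine iSup₂_le fun f hf => ?_
  calc b.N ((Metric.ball x r).indicator fun _ => 1) * ∫⁻ z in Metric.ball x r, ENNReal.ofReal |f z|
      ≤ 2 ^ n * C * volume (Metric.ball x r) * b.N f := by
        rw [mul_comm]
        exact b.setLIntegral_ball_mul_N_indicator_le hC f x hr
    _ ≤ 2 ^ n * C * volume (Metric.ball x r) := mul_le_of_le_one_right' hf

end BallBanach

/-- if the Hardy–Littlewood maximal operator is weakly bounded on `X`,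
then `‖χ_B‖_X ‖χ_B‖_{X'} ≤ C' |B|` for every ball `B`. -/
theorem stmt1 {n : ℕ} (b : BallBanach n)
    (hweak : ∃ C : ℝ≥0∞, C < ⊤ ∧ ∀ (f : En n → ℝ) (lam : ℝ), 0 < lam →
      b.N ({x | ENNReal.ofReal lam < maximal f x}.indicator fun _ => 1) ≤
        C * (ENNReal.ofReal lam)⁻¹ * b.N f) :
    ∃ C' : ℝ≥0∞, 0 < C' ∧ C' < ⊤ ∧ ∀ (x : En n) (r : ℝ), 0 < r →
      b.N ((Metric.ball x r).indicator fun _ => 1) *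
        b.dual ((Metric.ball x r).indicator fun _ => 1) ≤ C' * volume (Metric.ball x r) := by
  obtain ⟨C, hCtop, hC⟩ := hweak
  refine ⟨2 ^ n * C + 1, by positivity, by finiteness, fun x r hr => ?_⟩
  calc _ ≤ 2 ^ n * C * volume (Metric.ball x r) := b.N_indicator_ball_mul_dual_le hC x hr
    _ ≤ (2 ^ n * C + 1) * volume (Metric.ball x r) := by gcongr; exact le_self_add
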